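/- arXiv:math/0611425 — 3 statements merged into one kernel-verified Lean document; each statement's English description precedes it below -/
import Mathlib

section
/- Let n ≥ 2 and a ≥ −1. There is a constant C, depending only on n and a, such that for every ε ∈ (0,1) and all x, y in the closed upper half-space with x ≠ y, one has 0 ≤ E^ε(x,y) ≤ C |x − y|^{1−n}. -/
open MeasureTheory Set

/-- `A(x,y,θ) = (θ D(x,y)² + (1−θ) Ď(x,y)²)^{1/2}`, where `D(x,y)² = |x−y|²` and
`Ď(x,y)² = |x−y|² − (xₙ−yₙ)² + (xₙ+yₙ)² ( = |x'−y'|² + (xₙ+yₙ)²)`,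
the `n`-th coordinate being the coordinate `i`. -/
noncomputable def greenA {n : ℕ} (i : Fin n) (x y : EuclideanSpace ℝ (Fin n)) (θ : ℝ) : ℝ :=
  Real.sqrt (θ * ‖x - y‖ ^ 2 +
    (1 - θ) * (‖x - y‖ ^ 2 - (x i - y i) ^ 2 + (x i + y i) ^ 2))

/-- `F(x,y,θ) = yₙ^{a+1} A(x,y,θ)^{−(a+n)} (θ(1−θ))^{a/2}`. -/
noncomputable def greenF {n : ℕ} (a : ℝ) (i : Fin n)
    (x y : EuclideanSpace ℝ (Fin n)) (θ : ℝ) : ℝ :=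
  (y i) ^ (a + 1) * greenA i x y θ ^ (-(a + (n : ℝ))) * (θ * (1 - θ)) ^ (a / 2)

/-- The truncated Green kernel `E^ε(x,y) = ∫₀^{1−ε} F(x,y,θ) dθ`. -/
noncomputable def greenE {n : ℕ} (a : ℝ) (i : Fin n) (ε : ℝ)
    (x y : EuclideanSpace ℝ (Fin n)) : ℝ :=
  ∫ θ in (0 : ℝ)..(1 - ε), greenF a i x y θ

private lemma g_cont_aux (a : ℝ) {s : Set ℝ} (h0 : ∀ θ ∈ s, θ ≠ 0) (h1 : ∀ θ ∈ s, 1 - θ ≠ 0) :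
    ContinuousOn (fun θ : ℝ => θ ^ (a/2) * (1 - θ) ^ (-(1:ℝ)/2)) s := by
  refine ContinuousOn.mul ?_ ?_
  · exact continuousOn_id.rpow_const fun θ hθ => Or.inl (h0 θ hθ)
  · exact (continuousOn_const.sub continuousOn_id).rpow_const fun θ hθ => Or.inl (h1 θ hθ)

private lemma g_int (a : ℝ) (ha : -1 ≤ a) :
    IntegrableOn (fun θ : ℝ => θ ^ (a/2) * (1 - θ) ^ (-(1:ℝ)/2)) (Set.Ioo 0 1) := by
  have h2 : (-1:ℝ) < a/2 := by linarith
  have i1 : IntegrableOn (fun θ : ℝ => θ ^ (a/2) * (1 - θ) ^ (-(1:ℝ)/2))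
      (Set.Ioc 0 (1/2 : ℝ)) := by
    have base : IntegrableOn (fun θ : ℝ => ((1:ℝ)/2) ^ (-(1:ℝ)/2) * θ ^ (a/2))
        (Set.Ioc 0 (1/2 : ℝ)) := by
      have h := intervalIntegral.intervalIntegrable_rpow' (a := (0:ℝ)) (b := 1/2) h2
      rw [intervalIntegrable_iff_integrableOn_Ioc_of_le (by norm_num)] at h
      exact h.const_mul _
    refine MeasureTheory.Integrable.mono base ?_ ?_
    · exact (g_cont_aux a (fun θ hθ => ne_of_gt hθ.1)
        (fun θ hθ => by have := hθ.2; intro h; linarith)).aestronglyMeasurable measurableSet_Ioc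
    · rw [ae_restrict_iff' measurableSet_Ioc]
      filter_upwards with θ hθ
      have hθ0 : (0:ℝ) < θ := hθ.1
      have hθ1 : θ ≤ 1/2 := hθ.2
      have hb : (1 - θ) ^ (-(1:ℝ)/2) ≤ ((1:ℝ)/2) ^ (-(1:ℝ)/2) :=
        Real.rpow_le_rpow_of_nonpos (by norm_num) (by linarith) (by norm_num)
      rw [Real.norm_of_nonneg (mul_nonneg (Real.rpow_nonneg hθ0.le _)
        (Real.rpow_nonneg (by linarith) _)), Real.norm_of_nonneg (by positivity),
        mul_comm (((1:ℝ)/2) ^ (-(1:ℝ)/2))]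
      exact mul_le_mul_of_nonneg_left hb (Real.rpow_nonneg hθ0.le _)
  have i2 : IntegrableOn (fun θ : ℝ => θ ^ (a/2) * (1 - θ) ^ (-(1:ℝ)/2))
      (Set.Ioo (1/2 : ℝ) 1) := by
    set c2 : ℝ := max (((1:ℝ)/2) ^ (a/2)) 1 with hc2
    have base : IntegrableOn (fun θ : ℝ => c2 * (1 - θ) ^ (-(1:ℝ)/2))
        (Set.Ioo (1/2 : ℝ) 1) := by
      have h := (intervalIntegral.intervalIntegrable_rpow' (a := (0:ℝ)) (b := 1/2)
        (by norm_num : (-1:ℝ) < -(1:ℝ)/2)).comp_sub_left 1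
      rw [(by norm_num : (1:ℝ) - 0 = 1), (by norm_num : (1:ℝ) - 1/2 = 1/2)] at h
      have h' := h.symm
      rw [intervalIntegrable_iff_integrableOn_Ioc_of_le (by norm_num : (1:ℝ)/2 ≤ 1)] at h'
      exact ((h'.mono_set Set.Ioo_subset_Ioc_self).const_mul _)
    refine MeasureTheory.Integrable.mono base ?_ ?_
    · exact (g_cont_aux a (fun θ hθ => by have := hθ.1; positivity)
        (fun θ hθ => by have := hθ.2; intro h; linarith)).aestronglyMeasurable measurableSet_Ioo
    · rw [ae_restrict_iff' measurableSet_Ioo]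
      filter_upwards with θ hθ
      have hθ0 : (1:ℝ)/2 < θ := hθ.1
      have hθ1 : θ < 1 := hθ.2
      have hb : θ ^ (a/2) ≤ c2 := by
        rcases le_or_gt 0 a with h | h
        · exact le_trans (Real.rpow_le_one (by linarith) hθ1.le (by linarith)) (le_max_right _ _)
        · exact le_trans (Real.rpow_le_rpow_of_nonpos (by norm_num) hθ0.le (by linarith))
            (le_max_left _ _)
      rw [Real.norm_of_nonneg (mul_nonneg (Real.rpow_nonneg (by linarith) _)
        (Real.rpow_nonneg (by linarith) _)), Real.norm_of_nonneg
        (mul_nonneg (le_trans (Real.rpow_nonneg (by linarith : (0:ℝ) ≤ θ) (a/2)) hb)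
          (Real.rpow_nonneg (by linarith) _))]
      exact mul_le_mul_of_nonneg_right hb (Real.rpow_nonneg (by linarith) _)
  have hsub : Set.Ioo (0:ℝ) 1 ⊆ Set.Ioc 0 (1/2 : ℝ) ∪ Set.Ioo (1/2 : ℝ) 1 := by
    intro t ht
    rcases le_or_gt t (1/2) with h | h
    · exact Or.inl ⟨ht.1, h⟩
    · exact Or.inr ⟨h, ht.2⟩
  exact (i1.union i2).mono_set hsub


private lemma coordSq_le_normSq {n : ℕ} (i : Fin n) (v : EuclideanSpace ℝ (Fin n)) :
    (v i) ^ 2 ≤ ‖v‖ ^ 2 := by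
  rw [EuclideanSpace.norm_eq, Real.sq_sqrt (by positivity)]
  calc (v i)^2 = ‖v i‖^2 := by rw [Real.norm_eq_abs, sq_abs]
  _ ≤ ∑ j, ‖v j‖^2 := Finset.single_le_sum (f := fun j => ‖v j‖^2)
    (fun j _ => by positivity) (Finset.mem_univ i)

/-- For `n ≥ 2` and `a ≥ −1` there is `C = C(n,a)` such that for every
`ε ∈ (0,1)` and all `x ≠ y` in the closed upper half-space,
`0 ≤ E^ε(x,y) ≤ C |x−y|^{1−n}`. -/
theorem stmt_4 (n : ℕ) (hn : 2 ≤ n) (a : ℝ) (ha : -1 ≤ a) :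
    ∃ C : ℝ, 0 < C ∧
      ∀ ε ∈ Set.Ioo (0 : ℝ) 1, ∀ x y : EuclideanSpace ℝ (Fin n),
        0 ≤ x ⟨n - 1, by omega⟩ → 0 ≤ y ⟨n - 1, by omega⟩ → x ≠ y →
        0 ≤ greenE a ⟨n - 1, by omega⟩ ε x y ∧
        greenE a ⟨n - 1, by omega⟩ ε x y ≤ C * ‖x - y‖ ^ ((1 : ℝ) - n) := by
  set g : ℝ → ℝ := fun θ => θ ^ (a/2) * (1 - θ) ^ (-(1:ℝ)/2) with hg
  have gint : IntegrableOn g (Set.Ioo 0 1) := g_int a ha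
  set C : ℝ := (∫ θ in Set.Ioo (0:ℝ) 1, g θ) + 1 with hC
  have hgnn : ∀ θ ∈ Set.Ioo (0:ℝ) 1, 0 ≤ g θ := fun θ hθ =>
    mul_nonneg (Real.rpow_nonneg hθ.1.le _) (Real.rpow_nonneg (by linarith [hθ.2]) _)
  have hCpos : 0 < C := by
    have := setIntegral_nonneg (μ := volume) measurableSet_Ioo hgnn
    simp only [hC]; linarith
  refine ⟨C, hCpos, ?_⟩
  rintro ε ⟨hε0, hε1⟩ x y hx hy hxy
  set i : Fin n := ⟨n - 1, by omega⟩ with hi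
  have h0 : (0:ℝ) ≤ 1 - ε := by linarith
  have hlt1 : 1 - ε < 1 := by linarith
  set D : ℝ := ‖x - y‖ with hD
  have hDpos : 0 < D := by
    simp only [hD, norm_pos_iff]
    exact sub_ne_zero.mpr hxy
  -- nonnegativity of the integrand on [0, 1-ε]
  have hFnn : ∀ θ ∈ Set.Icc (0:ℝ) (1 - ε), 0 ≤ greenF a i x y θ := by
    intro θ hθ
    have h1θ : 0 ≤ 1 - θ := by have := hθ.2; linarith
    exact mul_nonneg (mul_nonneg (Real.rpow_nonneg hy _)
      (Real.rpow_nonneg (Real.sqrt_nonneg _) _))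
      (Real.rpow_nonneg (mul_nonneg hθ.1 h1θ) _)
  constructor
  · exact intervalIntegral.integral_nonneg h0 hFnn
  -- upper bound
  set G : ℝ → ℝ := fun θ => D ^ ((1:ℝ) - n) * g θ with hG
  have hGint : IntegrableOn G (Set.Ioo 0 1) := gint.const_mul _
  have hsub : Set.Ioc (0:ℝ) (1 - ε) ⊆ Set.Ioo (0:ℝ) 1 :=
    fun t ht => ⟨ht.1, lt_of_le_of_lt ht.2 hlt1⟩
  have hGIoc : IntegrableOn G (Set.Ioc 0 (1 - ε)) := hGint.mono_set hsub
  -- the pointwise bound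
  have key : ∀ θ ∈ Set.Ioc (0:ℝ) (1 - ε), greenF a i x y θ ≤ G θ := by
    intro θ hθ
    have hθ0 : 0 < θ := hθ.1
    have h1θ : 0 < 1 - θ := by have := hθ.2; linarith
    set A : ℝ := greenA i x y θ with hA
    have hcoord : (x i - y i) ^ 2 ≤ D ^ 2 := by
      have := coordSq_le_normSq i (x - y)
      simpa using this
    have hE2 : D ^ 2 ≤ θ * D ^ 2 + (1 - θ) * (D ^ 2 - (x i - y i) ^ 2 + (x i + y i) ^ 2) := by
      nlinarith [mul_nonneg hx hy, h1θ.le]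
    have hAD : D ≤ A := by
      rw [hA, greenA, ← hD]
      exact (Real.le_sqrt' hDpos).2 hE2
    have hApos : 0 < A := lt_of_lt_of_le hDpos hAD
    have hAy : Real.sqrt (1 - θ) * y i ≤ A := by
      rw [hA, greenA, ← hD]
      rw [show Real.sqrt (1 - θ) * y i = Real.sqrt ((1 - θ) * (y i) ^ 2) by
        rw [Real.sqrt_mul h1θ.le, Real.sqrt_sq hy]]
      apply Real.sqrt_le_sqrt
      nlinarith [mul_nonneg h1θ.le (sub_nonneg.2 hcoord),
        mul_nonneg h1θ.le (mul_nonneg hx hy), mul_nonneg h1θ.le (sq_nonneg (x i)),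
        mul_nonneg hθ0.le (sq_nonneg D)]
    have hn2 : (2:ℝ) ≤ (n:ℝ) := by exact_mod_cast hn
    -- split the exponent
    have hsplit : A ^ (-(a + (n:ℝ))) = A ^ (-(a+1)) * A ^ ((1:ℝ) - n) := by
      rw [← Real.rpow_add hApos]; congr 1; ring
    have h1 : A ^ ((1:ℝ) - n) ≤ D ^ ((1:ℝ) - n) :=
      Real.rpow_le_rpow_of_nonpos hDpos hAD (by linarith)
    have h2 : (y i) ^ (a+1) * A ^ (-(a+1)) ≤ (1 - θ) ^ (-(a+1)/2) := by
      rcases eq_or_lt_of_le hy with hy0 | hy0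
      · rcases eq_or_lt_of_le (by linarith : (0:ℝ) ≤ a + 1) with ha0 | ha0
        · rw [← hy0, ← ha0]
          simp [Real.rpow_zero]
        · rw [← hy0, Real.zero_rpow (ne_of_gt ha0), zero_mul]
          exact Real.rpow_nonneg h1θ.le _
      · have hsy : 0 < Real.sqrt (1 - θ) * y i :=
          mul_pos (Real.sqrt_pos.2 h1θ) hy0
        have hstep : A ^ (-(a+1)) ≤ (Real.sqrt (1 - θ) * y i) ^ (-(a+1)) :=
          Real.rpow_le_rpow_of_nonpos hsy hAy (by linarith)
        have hmul : (Real.sqrt (1 - θ) * y i) ^ (-(a+1))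
            = (1 - θ) ^ (-(a+1)/2) * (y i) ^ (-(a+1)) := by
          rw [Real.mul_rpow (Real.sqrt_nonneg _) hy0.le]
          congr 1
          rw [Real.sqrt_eq_rpow, ← Real.rpow_mul h1θ.le]
          congr 1; ring
        calc (y i) ^ (a+1) * A ^ (-(a+1))
            ≤ (y i) ^ (a+1) * ((1 - θ) ^ (-(a+1)/2) * (y i) ^ (-(a+1))) := by
              rw [← hmul]
              exact mul_le_mul_of_nonneg_left hstep (Real.rpow_nonneg hy0.le _)
          _ = (1 - θ) ^ (-(a+1)/2) * ((y i) ^ (a+1) * (y i) ^ (-(a+1))) := by ring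
          _ = (1 - θ) ^ (-(a+1)/2) := by
              rw [← Real.rpow_add hy0, add_neg_cancel, Real.rpow_zero, mul_one]
    have h3 : (θ * (1 - θ)) ^ (a/2) = θ ^ (a/2) * (1 - θ) ^ (a/2) :=
      Real.mul_rpow hθ0.le h1θ.le
    have hmerge : (1 - θ) ^ (-(a+1)/2) * (1 - θ) ^ (a/2) = (1 - θ) ^ (-(1:ℝ)/2) := by
      rw [← Real.rpow_add h1θ]; congr 1; ring
    calc greenF a i x y θ
        = ((y i) ^ (a+1) * A ^ (-(a+1))) * (A ^ ((1:ℝ) - n) * (θ ^ (a/2) * (1 - θ) ^ (a/2))) := by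
          rw [greenF, ← hA, hsplit, h3]; ring
      _ ≤ ((1 - θ) ^ (-(a+1)/2)) * (D ^ ((1:ℝ) - n) * (θ ^ (a/2) * (1 - θ) ^ (a/2))) := by
          apply mul_le_mul h2
          · exact mul_le_mul_of_nonneg_right h1
              (mul_nonneg (Real.rpow_nonneg hθ0.le _) (Real.rpow_nonneg h1θ.le _))
          · exact mul_nonneg (Real.rpow_nonneg (le_trans hDpos.le hAD) _)
              (mul_nonneg (Real.rpow_nonneg hθ0.le _) (Real.rpow_nonneg h1θ.le _))
          · exact Real.rpow_nonneg h1θ.le _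
      _ = G θ := by
          simp only [hG, hg]
          rw [← hmerge]; ring
  -- measurability of F on the interval
  have hcontA : Continuous (greenA i x y) := by
    unfold greenA
    exact Real.continuous_sqrt.comp (by fun_prop)
  have hFmeas : AEStronglyMeasurable (greenF a i x y)
      (volume.restrict (Set.Ioc 0 (1 - ε))) := by
    apply ContinuousOn.aestronglyMeasurable _ measurableSet_Ioc
    unfold greenF
    apply ContinuousOn.mul
    · apply ContinuousOn.mul continuousOn_const
      apply ContinuousOn.rpow_const hcontA.continuousOn
      intro θ hθ
      left
      have h1θ : 0 < 1 - θ := by have := hθ.2; linarith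
      -- greenA ≥ D > 0 : reprove positivity
      have hcoord : (x i - y i) ^ 2 ≤ D ^ 2 := by
        have := coordSq_le_normSq i (x - y); simpa using this
      have : 0 < θ * D ^ 2 + (1 - θ) * (D ^ 2 - (x i - y i) ^ 2 + (x i + y i) ^ 2) := by
        nlinarith [mul_nonneg hx hy, hθ.1, sq_nonneg (x i + y i)]
      unfold greenA
      rw [← hD]
      positivity
    · apply ContinuousOn.rpow_const (by fun_prop)
      intro θ hθ
      left
      have h1θ : 0 < 1 - θ := by have := hθ.2; linarith
      have := hθ.1
      positivity
  have hFint : IntegrableOn (greenF a i x y) (Set.Ioc 0 (1 - ε)) := by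
    refine MeasureTheory.Integrable.mono hGIoc hFmeas ?_
    rw [ae_restrict_iff' measurableSet_Ioc]
    filter_upwards with θ hθ
    rw [Real.norm_of_nonneg (hFnn θ (Set.Ioc_subset_Icc_self hθ))]
    exact le_trans (key θ hθ) (le_abs_self _)
  have hstep1 : greenE a i ε x y = ∫ θ in Set.Ioc (0:ℝ) (1 - ε), greenF a i x y θ := by
    rw [greenE, intervalIntegral.integral_of_le h0]
  rw [hstep1]
  calc ∫ θ in Set.Ioc (0:ℝ) (1 - ε), greenF a i x y θ
      ≤ ∫ θ in Set.Ioc (0:ℝ) (1 - ε), G θ :=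
        setIntegral_mono_on hFint hGIoc measurableSet_Ioc key
    _ ≤ ∫ θ in Set.Ioo (0:ℝ) 1, G θ := by
        apply setIntegral_mono_set hGint
        · exact (ae_restrict_iff' measurableSet_Ioo).2 (Filter.Eventually.of_forall
            fun θ hθ => mul_nonneg (Real.rpow_nonneg hDpos.le _) (hgnn θ hθ))
        · exact HasSubset.Subset.eventuallyLE hsub
    _ = D ^ ((1:ℝ) - n) * ∫ θ in Set.Ioo (0:ℝ) 1, g θ := integral_const_mul _ _
    _ ≤ C * D ^ ((1:ℝ) - n) := by
        rw [mul_comm]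
        apply mul_le_mul_of_nonneg_right _ (Real.rpow_nonneg hDpos.le _)
        simp only [hC]; linarith
end

section
/- Let a > 0, β ∈ ℝ and ρ > 0, and define the first-order operator Z by (Zu)(x) = u'(x) + iβ u(x) for functions u : [0, ∞) → ℂ. Suppose u : [0, ∞) → ℂ is infinitely differentiable and that u together with all of its derivatives is rapidly decreasing (for every integers m, j ≥ 0, sup_{x ≥ 0} x^m |u^{(j)}(x)| < ∞). If u satisfies, for all x ≥ 0, the ordinary differential equation x·( (Z(Zu))(x) − ρ² u(x) ) + (a+2)·(Zu)(x) = 0, then u ≡ 0. In other words, the model operator L⁰ = x(Z² − ρ²) + (a+2)Z is injective on smooth rapidly decreasing functions on the half-line. -/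
/-- The first-order operator `Z u = u' + iβ u` acting on functions `u : ℝ → ℂ`. -/
noncomputable def Zop (β : ℝ) (u : ℝ → ℂ) : ℝ → ℂ :=
  fun x => deriv u x + Complex.I * (β : ℂ) * u x

/-- For `a > 0`, `β ∈ ℝ`, `ρ > 0`, the model operator
`L⁰ = x(Z² − ρ²) + (a+2)Z`, with `Z u = u' + iβu`, is injective on smooth functions on the
half-line that are rapidly decreasing together with all their derivatives. -/
theorem stmt_13 (a β ρ : ℝ) (ha : 0 < a) (hρ : 0 < ρ)
    (u : ℝ → ℂ) (hu : ContDiff ℝ (⊤ : ℕ∞) u)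
    (hdecay : ∀ m j : ℕ, ∃ B : ℝ, ∀ x : ℝ, 0 ≤ x → x ^ m * ‖iteratedDeriv j u x‖ ≤ B)
    (heq : ∀ x : ℝ, 0 ≤ x →
      (x : ℂ) * (Zop β (Zop β u) x - (ρ : ℂ) ^ 2 * u x) + ((a : ℂ) + 2) * Zop β u x = 0) :
    ∀ x : ℝ, 0 ≤ x → u x = 0 := by
  have hud : Differentiable ℝ u := hu.differentiable (by simp)
  have hu' : Continuous (deriv u) := (contDiff_infty_iff_deriv.mp (hu.of_le (by simp))).2.continuous
  have hud' : Differentiable ℝ (deriv u) :=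
    (contDiff_infty_iff_deriv.mp (hu.of_le (by simp))).2.differentiable (by simp)
  set G : ℝ → ℝ := fun x => x ^ (a + 2 : ℝ) * (Zop β u x * (starRingEnd ℂ) (u x)).re with hGdef
  -- derivative of the inner real part, everywhere
  have hF : ∀ x : ℝ, HasDerivAt (fun y => (Zop β u y * (starRingEnd ℂ) (u y)).re)
      (((deriv (deriv u) x + Complex.I * β * deriv u x) * (starRingEnd ℂ) (u x)
        + Zop β u x * (starRingEnd ℂ) (deriv u x)).re) x := by
    intro x
    have hV : HasDerivAt (Zop β u) (deriv (deriv u) x + Complex.I * β * deriv u x) x :=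
      ((hud'.differentiableAt).hasDerivAt).add
        (((hud.differentiableAt).hasDerivAt).const_mul (Complex.I * β))
    have h1 := hV.mul ((hud.differentiableAt).hasDerivAt.star)
    exact Complex.reCLM.hasFDerivAt.comp_hasDerivAt x h1
  -- continuity of G
  have hGcont : Continuous G := by
    have h1 : Continuous fun x : ℝ => x ^ (a + 2 : ℝ) := by
      refine continuous_iff_continuousAt.mpr fun x => ?_
      exact Real.continuousAt_rpow_const x _ (Or.inr (by linarith))
    have h2 : Continuous fun x => (Zop β u x * (starRingEnd ℂ) (u x)).re := by
      refine Complex.continuous_re.comp (Continuous.mul ?_ ?_)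
      · exact hu'.add (continuous_const.mul hud.continuous)
      · exact Complex.continuous_conj.comp hud.continuous
    exact h1.mul h2
  -- derivative of G on (0,∞)
  have hG : ∀ x : ℝ, 0 < x → HasDerivAt G
      (x ^ (a + 2 : ℝ) * (Complex.normSq (Zop β u x) + ρ ^ 2 * Complex.normSq (u x))) x := by
    intro x hx
    have hr : HasDerivAt (fun y : ℝ => y ^ (a + 2 : ℝ)) ((a + 2) * x ^ (a + 1 : ℝ)) x := by
      have := Real.hasDerivAt_rpow_const (x := x) (p := a + 2) (Or.inl (ne_of_gt hx))
      convert this using 2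
      ring_nf
    have hD := hr.mul (hF x)
    refine hD.congr_deriv ?_
    symm
    -- compute the derivative value using the ODE
    have hxC : (x : ℂ) ≠ 0 := by exact_mod_cast ne_of_gt hx
    have E := heq x hx.le
    have hZZ : Zop β (Zop β u) x
        = (deriv (deriv u) x + Complex.I * β * deriv u x) + Complex.I * β * Zop β u x := by
      have hV : HasDerivAt (Zop β u) (deriv (deriv u) x + Complex.I * β * deriv u x) x :=
        ((hud'.differentiableAt).hasDerivAt).add
          (((hud.differentiableAt).hasDerivAt).const_mul (Complex.I * β))
      simp only [Zop, hV.deriv]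
    rw [hZZ] at E
    -- solve for u''
    have hVd : (deriv (deriv u) x + Complex.I * β * deriv u x)
        = ρ ^ 2 * u x - Complex.I * β * Zop β u x - (((a : ℂ) + 2) / x) * Zop β u x := by
      field_simp
      linear_combination E
    rw [hVd]
    have hDu : deriv u x = Zop β u x - Complex.I * β * u x := by simp [Zop]
    rw [hDu]
    have hpow : x ^ (a + 2 : ℝ) = x ^ (a + 1 : ℝ) * x := by
      rw [show (a + 2 : ℝ) = (a + 1) + 1 by ring, Real.rpow_add_one (ne_of_gt hx)]
    rw [hpow]
    set z := Zop β u x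
    set w := u x
    set t := x ^ (a + 1 : ℝ)
    rw [show ((ρ : ℂ)) ^ 2 = ((ρ ^ 2 : ℝ) : ℂ) by push_cast; ring]
    field_simp
    simp only [Complex.mul_re, Complex.mul_im, Complex.add_re, Complex.add_im, Complex.sub_re,
      Complex.sub_im, Complex.ofReal_re, Complex.ofReal_im, Complex.I_re, Complex.I_im,
      Complex.conj_re, Complex.conj_im, Complex.normSq_apply, Complex.div_re, Complex.div_im]
    simp only [Complex.re_ofNat, Complex.im_ofNat]
    field_simp
    ring
  -- G is monotone on [0, ∞)
  have hmono : MonotoneOn G (Set.Ici (0:ℝ)) := by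
    apply monotoneOn_of_deriv_nonneg (convex_Ici 0) hGcont.continuousOn
    · intro x hx
      rw [interior_Ici] at hx
      exact ((hG x hx).differentiableAt).differentiableWithinAt
    · intro x hx
      rw [interior_Ici] at hx
      rw [(hG x hx).deriv]
      have h1 := Complex.normSq_nonneg (Zop β u x)
      have h2 := Complex.normSq_nonneg (u x)
      have h3 : (0:ℝ) < x ^ (a + 2 : ℝ) := Real.rpow_pos_of_pos hx _
      nlinarith [mul_nonneg h3.le h1, mul_nonneg (mul_nonneg h3.le (sq_nonneg ρ)) h2]
  have hG0 : G 0 = 0 := by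
    simp [hGdef, Real.zero_rpow (by linarith : (a + 2 : ℝ) ≠ 0)]
  -- G tends to 0 at infinity
  have htend : Filter.Tendsto G Filter.atTop (nhds 0) := by
    obtain ⟨m, hm⟩ : ∃ m : ℕ, a + 3 ≤ m := exists_nat_ge (a + 3)
    obtain ⟨B1, hB1⟩ := hdecay m 1
    obtain ⟨B0, hB0⟩ := hdecay m 0
    obtain ⟨C0, hC0⟩ := hdecay 0 0
    refine squeeze_zero_norm' ?_ ?_
      (a := fun x : ℝ => (B1 + |β| * B0) * C0 * x⁻¹)
    · filter_upwards [Filter.eventually_ge_atTop (1:ℝ)] with x hx1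
      have hx0 : (0:ℝ) < x := lt_of_lt_of_le one_pos hx1
      have hVb : x ^ m * ‖Zop β u x‖ ≤ B1 + |β| * B0 := by
        have h1 : ‖Zop β u x‖ ≤ ‖deriv u x‖ + |β| * ‖u x‖ := by
          refine (norm_add_le _ _).trans ?_
          simp [norm_mul, Complex.norm_I, Complex.norm_real, Real.norm_eq_abs]
        have h2 := hB1 x hx0.le
        have h3 := hB0 x hx0.le
        rw [iteratedDeriv_one] at h2
        rw [iteratedDeriv_zero] at h3
        have hxm : (0:ℝ) ≤ x ^ m := by positivity
        nlinarith [mul_le_mul_of_nonneg_left h1 hxm, abs_nonneg β]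
      have hub : ‖u x‖ ≤ C0 := by simpa using hC0 x hx0.le
      have hrp : x ^ (a + 2 : ℝ) ≤ x ^ m / x := by
        have h1 : x ^ (a + 3 : ℝ) ≤ x ^ (m : ℝ) :=
          Real.rpow_le_rpow_of_exponent_le hx1 hm
        rw [Real.rpow_natCast] at h1
        have h2 : x ^ (a + 3 : ℝ) = x ^ (a + 2 : ℝ) * x := by
          rw [show (a + 3 : ℝ) = (a + 2) + 1 by ring, Real.rpow_add_one (ne_of_gt hx0)]
        rw [h2] at h1
        rw [le_div_iff₀ hx0]
        exact h1
      have hre : |(Zop β u x * (starRingEnd ℂ) (u x)).re| ≤ ‖Zop β u x‖ * ‖u x‖ := by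
        refine (Complex.abs_re_le_norm _).trans ?_
        rw [norm_mul]
        simp [Complex.norm_conj]
      have hrp0 : (0:ℝ) ≤ x ^ (a + 2 : ℝ) := le_of_lt (Real.rpow_pos_of_pos hx0 _)
      have hC0nn : (0:ℝ) ≤ C0 := le_trans (by positivity) hub
      have hVnn : (0:ℝ) ≤ ‖Zop β u x‖ := norm_nonneg _
      calc ‖G x‖ = x ^ (a + 2 : ℝ) * |(Zop β u x * (starRingEnd ℂ) (u x)).re| := by
            rw [hGdef]; simp [abs_mul, abs_of_nonneg hrp0]
        _ ≤ x ^ (a + 2 : ℝ) * (‖Zop β u x‖ * ‖u x‖) :=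
            mul_le_mul_of_nonneg_left hre hrp0
        _ = (x ^ (a + 2 : ℝ) * ‖Zop β u x‖) * ‖u x‖ := by ring
        _ ≤ ((x ^ m / x) * ‖Zop β u x‖) * ‖u x‖ := by
            have := mul_le_mul_of_nonneg_right hrp hVnn
            exact mul_le_mul_of_nonneg_right this (norm_nonneg _)
        _ = ((x ^ m * ‖Zop β u x‖) * x⁻¹) * ‖u x‖ := by ring
        _ ≤ ((B1 + |β| * B0) * x⁻¹) * C0 := by
            have hxinv : (0:ℝ) ≤ x⁻¹ := by positivity
            have h4 : (0:ℝ) ≤ (x ^ m * ‖Zop β u x‖) * x⁻¹ := by positivity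
            refine mul_le_mul (mul_le_mul_of_nonneg_right hVb hxinv) hub (norm_nonneg _) ?_
            have : (0:ℝ) ≤ B1 + |β| * B0 := le_trans (by positivity) hVb
            positivity
        _ = (B1 + |β| * B0) * C0 * x⁻¹ := by ring
    · have := tendsto_inv_atTop_zero (𝕜 := ℝ)
      have h := this.const_mul ((B1 + |β| * B0) * C0)
      simpa using h
  -- G vanishes on [0, ∞)
  have hGzero : ∀ x : ℝ, 0 ≤ x → G x = 0 := by
    intro x hx
    have h1 : G 0 ≤ G x := hmono (Set.self_mem_Ici) hx hx
    have h2 : G x ≤ 0 := by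
      refine ge_of_tendsto htend ?_
      filter_upwards [Filter.eventually_ge_atTop x] with y hy
      exact hmono hx (le_trans hx hy) hy
    rw [hG0] at h1
    linarith
  -- conclude u = 0 on (0, ∞)
  have hux : ∀ x : ℝ, 0 < x → u x = 0 := by
    intro x hx
    have hD := hG x hx
    have hconst : HasDerivAt G 0 x := by
      have hev : (fun _ : ℝ => (0:ℝ)) =ᶠ[nhds x] G := by
        filter_upwards [Ioi_mem_nhds hx] with y hy
        exact (hGzero y (le_of_lt hy)).symm
      exact (hasDerivAt_const x (0:ℝ)).congr_of_eventuallyEq hev.symm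
    have h0 := hD.unique hconst
    have hp : 0 < x ^ (a + 2 : ℝ) := Real.rpow_pos_of_pos hx _
    have hns : Complex.normSq (u x) = 0 := by
      have hsum : Complex.normSq (Zop β u x) + ρ ^ 2 * Complex.normSq (u x) = 0 := by
        rcases mul_eq_zero.mp h0 with h | h
        · exact absurd h (ne_of_gt hp)
        · exact h
      have h1 := Complex.normSq_nonneg (Zop β u x)
      have h2 := Complex.normSq_nonneg (u x)
      have hρ2 : (0:ℝ) < ρ ^ 2 := by positivity
      nlinarith
    exact Complex.normSq_eq_zero.mp hns
  intro x hx
  rcases eq_or_lt_of_le hx with h | h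
  · have h1 : Filter.Tendsto u (nhdsWithin 0 (Set.Ioi 0)) (nhds (u 0)) :=
      (hud.continuous.tendsto 0).mono_left nhdsWithin_le_nhds
    have h2 : Filter.Tendsto u (nhdsWithin 0 (Set.Ioi 0)) (nhds 0) := by
      refine Filter.Tendsto.congr' ?_ tendsto_const_nhds
      filter_upwards [self_mem_nhdsWithin] with y hy
      exact (hux y hy).symm
    rw [← h]
    exact tendsto_nhds_unique h1 h2
  · exact hux x h
end

section
/- Let a ≥ 0. For every ε ∈ (0,1], ∫_{−1/2}^{1/2} ε^{(a+2)/2} (t² + ε)^{−(a+3)/2} dt ≤ ∫_{−∞}^{∞} (t² + 1)^{−(a+3)/2} dt, and the right-hand side integral is finite. -/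
/-!
The substitution `t = √ε u` turns the integrand into `u ↦ (u² + 1)^{-(a+3)/2}`, the powers of `ε`
cancelling exactly, and the interval `[-1/2, 1/2]` into `[-1/(2√ε), 1/(2√ε)]`. The left-hand side
is thus the integral of a nonnegative integrable function over an interval, hence at most its
integral over `ℝ`; integrability holds because the exponent `a + 3` exceeds the dimension `1`.
-/

open MeasureTheory intervalIntegral

lemma integrable_sq_add_one_rpow_neg {r : ℝ} (hr : 1 < r) :
    Integrable (fun t : ℝ => (t ^ 2 + 1) ^ (-r / 2)) := by
  have h := integrable_rpow_neg_one_add_norm_sq (E := ℝ) (μ := volume) (r := r) (by simpa using hr)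
  simpa [Real.norm_eq_abs, sq_abs, add_comm] using h

lemma intervalIntegral_inv_mul_comp_div_le_integral {f : ℝ → ℝ} (hf : Integrable f)
    (hf_nonneg : ∀ u, 0 ≤ f u) {s b c : ℝ} (hs : 0 < s) (hbc : b ≤ c) :
    ∫ t in b..c, s⁻¹ * f (t / s) ≤ ∫ u, f u := by
  rw [intervalIntegral.integral_const_mul, integral_comp_div f hs.ne', smul_eq_mul, ← mul_assoc,
    inv_mul_cancel₀ hs.ne', one_mul, integral_of_le (by gcongr)]
  exact setIntegral_le_integral hf (.of_forall hf_nonneg)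

lemma rpow_mul_sq_add_rpow_eq_inv_sqrt_mul {ε : ℝ} (hε : 0 < ε) (a t : ℝ) :
    ε ^ ((a + 2) / 2) * (t ^ 2 + ε) ^ (-(a + 3) / 2) =
      (√ε)⁻¹ * ((t / √ε) ^ 2 + 1) ^ (-(a + 3) / 2) := by
  have hsq : (t / √ε) ^ 2 + 1 = (t ^ 2 + ε) / ε := by
    rw [div_pow, Real.sq_sqrt hε.le]
    field_simp
  rw [hsq, Real.div_rpow (by positivity) hε.le, Real.sqrt_eq_rpow, ← Real.rpow_neg hε.le,
    mul_div_assoc', mul_div_right_comm, ← Real.rpow_sub hε]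
  congr 2
  ring

/-- For `a ≥ 0` and every `ε ∈ (0,1]`,
`∫_{−1/2}^{1/2} ε^{(a+2)/2} (t² + ε)^{−(a+3)/2} dt ≤ ∫_ℝ (t² + 1)^{−(a+3)/2} dt`,
and the right-hand side integral is finite. -/
theorem stmt_17 (a : ℝ) (ha : 0 ≤ a) :
    Integrable (fun t : ℝ => (t ^ 2 + 1) ^ (-(a + 3) / 2)) ∧
    ∀ ε ∈ Set.Ioc (0 : ℝ) 1,
      (∫ t in (-(1 / 2) : ℝ)..(1 / 2), ε ^ ((a + 2) / 2) * (t ^ 2 + ε) ^ (-(a + 3) / 2)) ≤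
        ∫ t : ℝ, (t ^ 2 + 1) ^ (-(a + 3) / 2) := by
  have hint := integrable_sq_add_one_rpow_neg (r := a + 3) (by linarith)
  refine ⟨hint, fun ε hε => ?_⟩
  simp_rw [rpow_mul_sq_add_rpow_eq_inv_sqrt_mul hε.1]
  exact intervalIntegral_inv_mul_comp_div_le_integral hint
    (fun u => Real.rpow_nonneg (by positivity) _) (Real.sqrt_pos.mpr hε.1) (by norm_num)
end
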